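/- arXiv:2201.07528 — 2 statements merged into one kernel-verified Lean document; each statement's English description precedes it below -/
import Mathlib

section
/- Let G be a finite subcubic class two graph and let R be a representative conflicting subset of G of minimal order. Then there exists a minimal colouring of G whose set of conflicting edges is exactly R. -/
open SimpleGraph

variable {V : Type*}

/-- Two edges (of a graph) are adjacent if they are distinct and share a vertex. -/
def EdgesAdj (e₁ e₂ : Sym2 V) : Prop := e₁ ≠ e₂ ∧ ∃ v, v ∈ e₁ ∧ v ∈ e₂

/-- `f` is a proper edge colouring of `G`: adjacent edges of `G` get distinct colours. -/
def IsProperEC (G : SimpleGraph V) {α : Type*} (f : Sym2 V → α) : Prop :=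
  ∀ e₁ ∈ G.edgeSet, ∀ e₂ ∈ G.edgeSet, EdgesAdj e₁ e₂ → f e₁ ≠ f e₂

/-- `G` is 3-edge-colourable. -/
def ThreeEC (G : SimpleGraph V) : Prop := ∃ f : Sym2 V → Fin 3, IsProperEC G f

/-- The degree of a vertex. -/
noncomputable def deg (G : SimpleGraph V) (v : V) : ℕ := Nat.card (G.neighborSet v)

/-- Every vertex has degree at most 3. -/
def Subcubic (G : SimpleGraph V) : Prop := ∀ v, deg G v ≤ 3

/-- Every vertex has degree exactly 3. -/
def CubicGraph (G : SimpleGraph V) : Prop := ∀ v, deg G v = 3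

/-- The resistance of `G`: the minimum number of edges whose removal from `G`
yields a 3-edge-colourable graph. -/
noncomputable def resistance (G : SimpleGraph V) : ℕ :=
  sInf {n | ∃ R : Set (Sym2 V), R.ncard = n ∧ ThreeEC (G.deleteEdges R)}

/-- `M` is a minimal conflicting subgraph of `G`: a subgraph of `G` that is not
3-edge-colourable, but `M − e` is 3-edge-colourable for every edge `e` of `M`. -/
def MinConfl (G M : SimpleGraph V) : Prop :=
  M ≤ G ∧ ¬ ThreeEC M ∧ ∀ e ∈ M.edgeSet, ThreeEC (M.deleteEdges {e})

/-- `R` is a representative conflicting subset of `G`: a set of edges of `G`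
containing at least one edge from every minimal conflicting subgraph of `G`. -/
def RepConfl (G : SimpleGraph V) (R : Set (Sym2 V)) : Prop :=
  R ⊆ G.edgeSet ∧ ∀ M : SimpleGraph V, MinConfl G M → (R ∩ M.edgeSet).Nonempty

/-- A minimal colouring of `G`: a proper 4-edge-colouring (colour `0` playing the role
of the fourth colour) in which exactly `resistance G` edges of `G` receive colour `0`. -/
def IsMinimalColoring (G : SimpleGraph V) (f : Sym2 V → Fin 4) : Prop :=
  IsProperEC G f ∧ {e | e ∈ G.edgeSet ∧ f e = 0}.ncard = resistance G

/-!
A set `R` of edges meets every minimal conflicting subgraph exactly when `G - R` is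
3-edge-colourable, since every non-3-edge-colourable subgraph contains a minimal one. Hence a
representative conflicting subset of minimal order has exactly `r(G)` edges, and no edge of it
can be put back into a 3-edge-colouring of `G - R`.

Such an `R` is a matching. If `uv` and `vw` lie in `R`, then, `G` being subcubic, at most one
colour `b` occurs at `v` in `G - R`, while some colour is missing at `u` and some at `w`; since a
colour missing at both ends of a deleted edge would recolour it, `b` is missing at `u` and at
`w`. For a colour `c` missing at `v`, swapping `b` and `c` on the Kempe chain of `u` (resp. `w`)
would again free a colour for `uv` (resp. `vw`), unless that chain reaches `v`. But `b`/`c`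
chains are paths and cycles, and `u`, `v`, `w` would be three distinct ends of one path.

Colouring `R` with `0` and `G - R` with `1, 2, 3` is then a minimal colouring.
-/

namespace SimpleGraph

theorem Reachable.mem_of_adj_closed {S : SimpleGraph V} {s : Set V}
    (hs : ∀ y ∈ s, ∀ z, S.Adj y z → z ∈ s) {y z : V} (hy : y ∈ s) (h : S.Reachable y z) :
    z ∈ s := by
  obtain ⟨q⟩ := h
  induction q with
  | nil => exact hy
  | cons hadj _ ih => exact ih (hs _ hy _ hadj)

theorem Walk.IsPath.ncard_neighborSet_toSubgraph_eq_two {S : SimpleGraph V} {u v y : V}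
    {p : S.Walk u v} (hp : p.IsPath) (hy : y ∈ p.support) (hyu : y ≠ u) (hyv : y ≠ v) :
    (p.toSubgraph.neighborSet y).ncard = 2 := by
  obtain ⟨i, rfl, hi⟩ := Walk.mem_support_iff_exists_getVert.mp hy
  refine hp.ncard_neighborSet_toSubgraph_internal_eq_two ?_ ?_
  · rintro rfl
    exact hyu p.getVert_zero
  · refine lt_of_le_of_ne hi ?_
    rintro rfl
    exact hyv p.getVert_length

/-- A path between two vertices of degree at most one is closed under adjacency here, so it is
a whole connected component. -/
theorem not_reachable_of_ncard_neighborSet_le_one [Finite V] {S : SimpleGraph V}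
    (hS : ∀ y, (S.neighborSet y).ncard ≤ 2) {u v w : V} (huv : u ≠ v) (hwu : w ≠ u)
    (hwv : w ≠ v) (hu : (S.neighborSet u).ncard ≤ 1) (hv : (S.neighborSet v).ncard ≤ 1)
    (hw : (S.neighborSet w).ncard ≤ 1) (h : S.Reachable u v) : ¬ S.Reachable w v := by
  classical
  obtain ⟨p, hp⟩ := h.some.toPath
  have hnil : ¬ p.Nil := Walk.not_nil_of_ne huv
  have hnbr : ∀ y ∈ p.support, S.neighborSet y = p.toSubgraph.neighborSet y := by
    intro y hy
    refine (Set.eq_of_subset_of_ncard_le (p.toSubgraph.neighborSet_subset y) ?_ ?_).symm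
    · by_cases hyu : y = u
      · rw [hyu, hp.neighborSet_toSubgraph_startpoint hnil, Set.ncard_singleton]; exact hu
      by_cases hyv : y = v
      · rw [hyv, hp.neighborSet_toSubgraph_endpoint hnil, Set.ncard_singleton]; exact hv
      rw [hp.ncard_neighborSet_toSubgraph_eq_two hy hyu hyv]; exact hS y
    · exact Set.toFinite _
  have hclosed : ∀ y ∈ p.support, ∀ z, S.Adj y z → z ∈ p.support := fun y hy z hz =>
    p.mem_verts_toSubgraph.mp (p.toSubgraph.neighborSet_subset_verts y (hnbr y hy ▸ hz))
  intro hwv'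
  have hw' : w ∈ p.support := hwv'.symm.mem_of_adj_closed hclosed p.end_mem_support
  have := hp.ncard_neighborSet_toSubgraph_eq_two hw' hwu hwv
  rw [← hnbr w hw'] at this
  omega

end SimpleGraph

section Resistance

variable {G : SimpleGraph V}

theorem ThreeEC.anti {H : SimpleGraph V} (hHG : H ≤ G) (hG : ThreeEC G) : ThreeEC H := by
  obtain ⟨f, hf⟩ := hG
  exact ⟨f, fun e₁ he₁ e₂ he₂ => hf e₁ (edgeSet_mono hHG he₁) e₂ (edgeSet_mono hHG he₂)⟩

theorem threeEC_bot : ThreeEC (⊥ : SimpleGraph V) :=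
  ⟨fun _ => 0, fun e he => by simp at he⟩

theorem exists_minConfl_le [Finite V] {H : SimpleGraph V} (hHG : H ≤ G) (hH : ¬ ThreeEC H) :
    ∃ M, MinConfl G M ∧ M ≤ H := by
  obtain ⟨M, hMH, hM, hMmin⟩ := exists_minimal_le_of_wellFoundedLT (fun M => ¬ ThreeEC M) H hH
  refine ⟨M, ⟨hMH.trans hHG, hM, fun e he => ?_⟩, hMH⟩
  by_contra h
  have := edgeSet_mono (hMmin h (deleteEdges_le {e})) he
  simp at this

theorem RepConfl.threeEC_deleteEdges [Finite V] {R : Set (Sym2 V)} (hR : RepConfl G R) :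
    ThreeEC (G.deleteEdges R) := by
  by_contra h
  obtain ⟨M, hM, hMR⟩ := exists_minConfl_le (deleteEdges_le R) h
  obtain ⟨e, heR, heM⟩ := hR.2 M hM
  have heGR := edgeSet_mono hMR heM
  rw [edgeSet_deleteEdges] at heGR
  exact heGR.2 heR

theorem repConfl_of_threeEC_deleteEdges {D : Set (Sym2 V)} (hDG : D ⊆ G.edgeSet)
    (hD : ThreeEC (G.deleteEdges D)) : RepConfl G D := by
  refine ⟨hDG, fun M hM => ?_⟩
  by_contra hMD
  exact hM.2.1 (hD.anti fun a b hab => deleteEdges_adj.mpr ⟨hM.1 hab, fun h => hMD ⟨_, h, hab⟩⟩)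

theorem resistance_le_ncard {D : Set (Sym2 V)} (hD : ThreeEC (G.deleteEdges D)) :
    resistance G ≤ D.ncard :=
  Nat.sInf_le ⟨D, rfl, hD⟩

theorem exists_ncard_eq_resistance [Finite V] (G : SimpleGraph V) :
    ∃ D ⊆ G.edgeSet, D.ncard = resistance G ∧ ThreeEC (G.deleteEdges D) := by
  obtain ⟨D, hD, hD3⟩ := Nat.sInf_mem (s := {n | ∃ D : Set (Sym2 V), D.ncard = n ∧
    ThreeEC (G.deleteEdges D)}) ⟨_, G.edgeSet, rfl, by simpa using threeEC_bot⟩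
  rw [deleteEdges_eq_inter_edgeSet] at hD3
  exact ⟨D ∩ G.edgeSet, Set.inter_subset_right,
    le_antisymm ((Set.ncard_inter_le_ncard_left _ _).trans_eq hD) (resistance_le_ncard hD3), hD3⟩

theorem RepConfl.ncard_eq_resistance [Finite V] {R : Set (Sym2 V)} (hR : RepConfl G R)
    (hmin : ∀ R', RepConfl G R' → R.ncard ≤ R'.ncard) : R.ncard = resistance G := by
  obtain ⟨D, hDG, hD, hD3⟩ := exists_ncard_eq_resistance G
  exact le_antisymm (hD ▸ hmin D (repConfl_of_threeEC_deleteEdges hDG hD3))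
    (resistance_le_ncard hR.threeEC_deleteEdges)

theorem not_threeEC_deleteEdges_diff_singleton [Finite V] {R : Set (Sym2 V)}
    (hR : R.ncard = resistance G) {e : Sym2 V} (he : e ∈ R) :
    ¬ ThreeEC (G.deleteEdges (R \ {e})) := fun h =>
  (Set.ncard_sdiff_singleton_lt_of_mem he).not_ge (hR ▸ resistance_le_ncard h)

end Resistance

theorem EdgesAdj.symm {e₁ e₂ : Sym2 V} (h : EdgesAdj e₁ e₂) : EdgesAdj e₂ e₁ :=
  ⟨h.1.symm, h.2.imp fun _ hv => hv.symm⟩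

section Colouring

variable {α : Type*} {H : SimpleGraph V} {f : Sym2 V → α}

def colorsAt (H : SimpleGraph V) (f : Sym2 V → α) (y : V) : Set α :=
  (fun z => f s(y, z)) '' H.neighborSet y

theorem IsProperEC.injOn_neighborSet (hf : IsProperEC H f) (y : V) :
    Set.InjOn (fun z => f s(y, z)) (H.neighborSet y) := by
  intro z hz z' hz' h
  by_contra hne
  exact hf _ hz _ hz' ⟨fun h' => hne (Sym2.congr_right.mp h'), y, Sym2.mem_mk_left y z,
    Sym2.mem_mk_left y z'⟩ h

theorem IsProperEC.exists_of_subset_insert {H' : SimpleGraph V} (hf : IsProperEC H f)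
    {p q : V} {a : α} (hp : a ∉ colorsAt H f p) (hq : a ∉ colorsAt H f q)
    (hH' : H'.edgeSet ⊆ insert s(p, q) H.edgeSet) : ∃ g : Sym2 V → α, IsProperEC H' g := by
  classical
  refine ⟨Function.update f s(p, q) a, ?_⟩
  have hmem : ∀ d ∈ H'.edgeSet, d ≠ s(p, q) → d ∈ H.edgeSet := fun d hd hne =>
    (hH' hd).resolve_left hne
  have hfree : ∀ d ∈ H.edgeSet, EdgesAdj d s(p, q) → f d ≠ a := by
    rintro d hd ⟨-, y, hyd, hy⟩ rfl
    obtain ⟨z, rfl⟩ := Sym2.mem_iff_exists.mp hyd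
    rcases Sym2.mem_iff.mp hy with rfl | rfl
    exacts [hp ⟨z, hd, rfl⟩, hq ⟨z, hd, rfl⟩]
  intro d₁ hd₁ d₂ hd₂ hadj
  by_cases h₁ : d₁ = s(p, q) <;> by_cases h₂ : d₂ = s(p, q)
  · exact absurd (h₁.trans h₂.symm) hadj.1
  · subst h₁
    simpa [Function.update_of_ne h₂] using (hfree d₂ (hmem d₂ hd₂ h₂) hadj.symm).symm
  · subst h₂
    simpa [Function.update_of_ne h₁] using hfree d₁ (hmem d₁ hd₁ h₁) hadj
  · simpa [Function.update_of_ne h₁, Function.update_of_ne h₂] using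
      hf d₁ (hmem d₁ hd₁ h₁) d₂ (hmem d₂ hd₂ h₂) hadj

theorem IsProperEC.swap_on [DecidableEq α] (hf : IsProperEC H f) {b c : α} {C : Set (Sym2 V)}
    [DecidablePred (· ∈ C)] (hC : ∀ e ∈ C, f e = b ∨ f e = c)
    (hCadj : ∀ e ∈ C, ∀ e' ∈ H.edgeSet, EdgesAdj e e' → f e' = b ∨ f e' = c → e' ∈ C) :
    IsProperEC H (fun e => if e ∈ C then Equiv.swap b c (f e) else f e) := by
  have hmixed : ∀ d₁ ∈ C, ∀ d₂ ∈ H.edgeSet, d₂ ∉ C → EdgesAdj d₁ d₂ →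
      Equiv.swap b c (f d₁) ≠ f d₂ := by
    intro d₁ h₁ d₂ hd₂ h₂ hadj h
    rcases hC d₁ h₁ with h' | h' <;> rw [h'] at h
    · exact h₂ (hCadj d₁ h₁ d₂ hd₂ hadj (Or.inr (by simpa using h.symm)))
    · exact h₂ (hCadj d₁ h₁ d₂ hd₂ hadj (Or.inl (by simpa using h.symm)))
  intro d₁ hd₁ d₂ hd₂ hadj
  by_cases h₁ : d₁ ∈ C <;> by_cases h₂ : d₂ ∈ C <;> simp only [h₁, h₂, if_true, if_false]
  · exact (Equiv.swap b c).injective.ne (hf d₁ hd₁ d₂ hd₂ hadj)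
  · exact hmixed d₁ h₁ d₂ hd₂ h₂ hadj
  · exact (hmixed d₂ h₂ d₁ hd₁ h₁ hadj.symm).symm
  · exact hf d₁ hd₁ d₂ hd₂ hadj

end Colouring

section Kempe

variable {α : Type*} {H : SimpleGraph V} {f : Sym2 V → α}

/-- The `b`/`c` Kempe chains of `f` are the connected components of this graph. -/
def kempeGraph (H : SimpleGraph V) (f : Sym2 V → α) (b c : α) : SimpleGraph V :=
  fromEdgeSet (H.edgeSet ∩ f ⁻¹' {b, c})

theorem kempeGraph_adj {b c : α} {y z : V} :
    (kempeGraph H f b c).Adj y z ↔ H.Adj y z ∧ (f s(y, z) = b ∨ f s(y, z) = c) := by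
  simp only [kempeGraph, fromEdgeSet_adj, Set.mem_inter_iff, mem_edgeSet, Set.mem_preimage,
    Set.mem_insert_iff, Set.mem_singleton_iff]
  exact ⟨fun h => h.1, fun h => ⟨h, h.1.ne⟩⟩

theorem IsProperEC.exists_kempe_swap (hf : IsProperEC H f) {b c : α} {w v : V}
    (hw : b ∉ colorsAt H f w) (hwv : ¬ (kempeGraph H f b c).Reachable w v) :
    ∃ g, IsProperEC H g ∧ c ∉ colorsAt H g w ∧ colorsAt H g v = colorsAt H f v := by
  classical
  set K := kempeGraph H f b c
  set C : Set (Sym2 V) := {e | e ∈ K.edgeSet ∧ ∃ y ∈ e, K.Reachable w y}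
  have hCreach : ∀ e ∈ C, ∀ y ∈ e, K.Reachable w y := by
    rintro e ⟨heK, y₀, hy₀, hwy₀⟩ y hy
    obtain ⟨z, rfl⟩ := Sym2.mem_iff_exists.mp hy₀
    rcases Sym2.mem_iff.mp hy with rfl | rfl
    exacts [hwy₀, hwy₀.trans (Adj.reachable heK)]
  have hC : ∀ e ∈ C, f e = b ∨ f e = c := by
    rintro e ⟨heK, -⟩
    obtain ⟨y, z⟩ := e
    exact (kempeGraph_adj.mp heK).2
  have hCadj : ∀ e ∈ C, ∀ e' ∈ H.edgeSet, EdgesAdj e e' → f e' = b ∨ f e' = c → e' ∈ C := by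
    rintro e he e' he' ⟨-, y, hy, hy'⟩ hbc
    obtain ⟨z, rfl⟩ := Sym2.mem_iff_exists.mp hy'
    exact ⟨kempeGraph_adj.mpr ⟨he', hbc⟩, y, hy', hCreach e he y hy⟩
  refine ⟨_, hf.swap_on hC hCadj, ?_, Set.image_congr fun z _ => ?_⟩
  · rintro ⟨z, hz, hgz⟩
    by_cases hzC : s(w, z) ∈ C
    · simp only [hzC, if_true] at hgz
      rcases hC _ hzC with h | h
      · exact hw ⟨z, hz, h⟩
      · rw [h, Equiv.swap_apply_right] at hgz
        exact hw ⟨z, hz, h.trans hgz.symm⟩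
    · simp only [hzC, if_false] at hgz
      exact hzC ⟨kempeGraph_adj.mpr ⟨hz, Or.inr hgz⟩, w, Sym2.mem_mk_left w z, .refl w⟩
  · have hzC : s(v, z) ∉ C := fun h => hwv (hCreach _ h v (Sym2.mem_mk_left v z))
    simp only [hzC, if_false]

theorem IsProperEC.ncard_neighborSet_kempeGraph_le [Finite V] (hf : IsProperEC H f) (b c : α)
    (y : V) : ((kempeGraph H f b c).neighborSet y).ncard ≤ ({b, c} ∩ colorsAt H f y).ncard := by
  have hsub : (kempeGraph H f b c).neighborSet y ⊆ H.neighborSet y := fun z hz =>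
    (kempeGraph_adj.mp hz).1
  rw [← ((hf.injOn_neighborSet y).mono hsub).ncard_image]
  refine Set.ncard_le_ncard ?_ ((Set.toFinite {b, c}).inter_of_left _)
  rintro _ ⟨z, hz, rfl⟩
  exact ⟨(kempeGraph_adj.mp hz).2, z, hsub hz, rfl⟩

theorem IsProperEC.ncard_neighborSet_kempeGraph_le_two [Finite V] (hf : IsProperEC H f)
    (b c : α) (y : V) : ((kempeGraph H f b c).neighborSet y).ncard ≤ 2 :=
  (hf.ncard_neighborSet_kempeGraph_le b c y).trans <|
    (Set.ncard_le_ncard Set.inter_subset_left).trans <| (Set.ncard_insert_le b {c}).trans_eq <|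
      by rw [Set.ncard_singleton]

theorem IsProperEC.ncard_neighborSet_kempeGraph_le_one [Finite V] (hf : IsProperEC H f)
    {b c : α} {y : V} (hy : b ∉ colorsAt H f y ∨ c ∉ colorsAt H f y) :
    ((kempeGraph H f b c).neighborSet y).ncard ≤ 1 := by
  refine (hf.ncard_neighborSet_kempeGraph_le b c y).trans ?_
  rw [Set.ncard_le_one_iff (((Set.toFinite {b, c}).inter_of_left _))]
  rintro a a' ⟨ha, hay⟩ ⟨ha', hay'⟩
  rcases hy with hy | hy <;> simp only [Set.mem_insert_iff, Set.mem_singleton_iff] at ha ha' <;>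
    grind

end Kempe

section Subcubic

variable {α : Type*} {G : SimpleGraph V} {R : Set (Sym2 V)}

theorem ncard_colorsAt_deleteEdges_add_le [Finite V] (hG : Subcubic G) (f : Sym2 V → α) {y : V}
    {X : Set V} (hXG : X ⊆ G.neighborSet y) (hXR : ∀ x ∈ X, s(y, x) ∈ R) :
    (colorsAt (G.deleteEdges R) f y).ncard + X.ncard ≤ 3 := by
  have hdisj : Disjoint ((G.deleteEdges R).neighborSet y) X :=
    Set.disjoint_left.mpr fun z hz hzX => (deleteEdges_adj.mp hz).2 (hXR z hzX)
  have hsub : (G.deleteEdges R).neighborSet y ∪ X ⊆ G.neighborSet y :=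
    Set.union_subset (fun z hz => (deleteEdges_adj.mp hz).1) hXG
  calc (colorsAt (G.deleteEdges R) f y).ncard + X.ncard
      ≤ ((G.deleteEdges R).neighborSet y).ncard + X.ncard := by
        gcongr; exact Set.ncard_image_le
    _ = ((G.deleteEdges R).neighborSet y ∪ X).ncard := (Set.ncard_union_eq hdisj).symm
    _ ≤ (G.neighborSet y).ncard := Set.ncard_le_ncard hsub
    _ ≤ 3 := by simpa only [deg, Nat.card_coe_set_eq] using hG y

theorem exists_not_mem_colorsAt_deleteEdges [Finite V] (hG : Subcubic G) (f : Sym2 V → Fin 3)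
    {x y : V} (hxy : G.Adj y x) (hR : s(y, x) ∈ R) :
    ∃ a, a ∉ colorsAt (G.deleteEdges R) f y := by
  by_contra! h
  have hbound := ncard_colorsAt_deleteEdges_add_le hG f (X := {x})
    (Set.singleton_subset_iff.mpr hxy) (by simpa using hR)
  rw [Set.eq_univ_of_forall h, Set.ncard_univ, Nat.card_eq_fintype_card, Fintype.card_fin,
    Set.ncard_singleton] at hbound
  omega

theorem colorsAt_deleteEdges_subsingleton [Finite V] (hG : Subcubic G) (f : Sym2 V → α)
    {u w y : V} (huw : u ≠ w) (hu : G.Adj y u) (hw : G.Adj y w) (huR : s(y, u) ∈ R)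
    (hwR : s(y, w) ∈ R) : (colorsAt (G.deleteEdges R) f y).Subsingleton := by
  have hbound := ncard_colorsAt_deleteEdges_add_le hG f (X := {u, w})
    (Set.pair_subset hu hw) (by rintro x (rfl | rfl) <;> assumption)
  rw [Set.ncard_pair huw] at hbound
  exact (Set.ncard_le_one (s := colorsAt _ f y) ((Set.toFinite _).image _)).mp (by omega)

end Subcubic

theorem edgeSet_deleteEdges_diff_singleton_subset (G : SimpleGraph V) (R : Set (Sym2 V))
    (e : Sym2 V) : (G.deleteEdges (R \ {e})).edgeSet ⊆ insert e (G.deleteEdges R).edgeSet := by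
  intro d hd
  rw [edgeSet_deleteEdges] at hd ⊢
  by_cases hde : d = e
  · exact .inl hde
  · exact .inr ⟨hd.1, fun hdR => hd.2 ⟨hdR, hde⟩⟩

theorem not_edgesAdj_of_forall_not_threeEC [Finite V] {G : SimpleGraph V} (hG : Subcubic G)
    {R : Set (Sym2 V)} (hRG : R ⊆ G.edgeSet) (h3 : ThreeEC (G.deleteEdges R))
    (hR : ∀ e ∈ R, ¬ ThreeEC (G.deleteEdges (R \ {e}))) {e₁ e₂ : Sym2 V} (he₁ : e₁ ∈ R)
    (he₂ : e₂ ∈ R) : ¬ EdgesAdj e₁ e₂ := by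
  rintro ⟨hne, v, hv₁, hv₂⟩
  obtain ⟨u, rfl⟩ := Sym2.mem_iff_exists.mp hv₁
  obtain ⟨w, rfl⟩ := Sym2.mem_iff_exists.mp hv₂
  have huw : u ≠ w := fun h => hne (h ▸ rfl)
  have hu : G.Adj v u := hRG he₁
  have hw : G.Adj v w := hRG he₂
  set H := G.deleteEdges R
  obtain ⟨f, hf⟩ := h3
  have hpresent : ∀ {x}, s(v, x) ∈ R → ∀ a, a ∉ colorsAt H f v → a ∈ colorsAt H f x := by
    intro x hx a hav
    by_contra hax
    obtain ⟨g, hg⟩ :=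
      hf.exists_of_subset_insert hav hax (edgeSet_deleteEdges_diff_singleton_subset ..)
    exact hR _ hx ⟨g, hg⟩
  have hchain : ∀ {x}, s(v, x) ∈ R → ∀ b c, b ∉ colorsAt H f x → c ∉ colorsAt H f v →
      (kempeGraph H f b c).Reachable x v := by
    intro x hx b c hbx hcv
    by_contra hxv
    obtain ⟨g, hg, hgx, hgv⟩ := hf.exists_kempe_swap hbx hxv
    obtain ⟨g', hg'⟩ := hg.exists_of_subset_insert hgx (hgv ▸ hcv)
      (edgeSet_deleteEdges_diff_singleton_subset G R s(x, v))
    exact hR _ hx (Sym2.eq_swap (a := v) ▸ ⟨g', hg'⟩)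
  obtain ⟨b, hbw⟩ := exists_not_mem_colorsAt_deleteEdges hG f hw.symm (Sym2.eq_swap ▸ he₂)
  obtain ⟨b', hb'u⟩ := exists_not_mem_colorsAt_deleteEdges hG f hu.symm (Sym2.eq_swap ▸ he₁)
  have hsingle := colorsAt_deleteEdges_subsingleton hG f huw hu hw he₁ he₂
  have hbv : b ∈ colorsAt H f v := by_contra fun h => hbw (hpresent he₂ b h)
  have hbu : b ∉ colorsAt H f u :=
    hsingle (by_contra fun h => hb'u (hpresent he₁ b' h)) hbv ▸ hb'u
  obtain ⟨c, hcb⟩ := exists_ne b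
  have hcv : c ∉ colorsAt H f v := fun h => hcb (hsingle h hbv)
  exact not_reachable_of_ncard_neighborSet_le_one (hf.ncard_neighborSet_kempeGraph_le_two b c)
    hu.ne' huw.symm hw.ne' (hf.ncard_neighborSet_kempeGraph_le_one (.inl hbu))
    (hf.ncard_neighborSet_kempeGraph_le_one (.inr hcv))
    (hf.ncard_neighborSet_kempeGraph_le_one (.inl hbw))
    (hchain he₁ b c hbu hcv) (hchain he₂ b c hbw hcv)

theorem IsProperEC.ite_succ {G : SimpleGraph V} {R : Set (Sym2 V)} [DecidablePred (· ∈ R)]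
    {n : ℕ} {f : Sym2 V → Fin n} (hf : IsProperEC (G.deleteEdges R) f)
    (hR : ∀ e₁ ∈ R, ∀ e₂ ∈ R, ¬ EdgesAdj e₁ e₂) :
    IsProperEC G (fun e => if e ∈ R then 0 else (f e).succ) := by
  intro d₁ hd₁ d₂ hd₂ hadj
  by_cases h₁ : d₁ ∈ R <;> by_cases h₂ : d₂ ∈ R <;> simp only [h₁, h₂, if_true, if_false]
  · exact absurd hadj (hR d₁ h₁ d₂ h₂)
  · exact (Fin.succ_ne_zero _).symm
  · exact Fin.succ_ne_zero _
  · have hH : ∀ d ∈ G.edgeSet, d ∉ R → d ∈ (G.deleteEdges R).edgeSet := fun d hd hdR => by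
      rw [edgeSet_deleteEdges]; exact ⟨hd, hdR⟩
    exact (Fin.succ_injective n).ne (hf d₁ (hH d₁ hd₁ h₁) d₂ (hH d₂ hd₂ h₂) hadj)

theorem stmt_8_general {V : Type*} [Fintype V] (G : SimpleGraph V)
    (hsub : Subcubic G)
    (R : Set (Sym2 V)) (hR : RepConfl G R)
    (hmin : ∀ R' : Set (Sym2 V), RepConfl G R' → R.ncard ≤ R'.ncard) :
    ∃ f : Sym2 V → Fin 4, IsMinimalColoring G f ∧ {e | e ∈ G.edgeSet ∧ f e = 0} = R := by
  classical
  have hcard : R.ncard = resistance G := hR.ncard_eq_resistance hmin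
  obtain ⟨f, hf⟩ := hR.threeEC_deleteEdges
  have hmatching : ∀ e₁ ∈ R, ∀ e₂ ∈ R, ¬ EdgesAdj e₁ e₂ := fun _ he₁ _ he₂ =>
    not_edgesAdj_of_forall_not_threeEC hsub hR.1 ⟨f, hf⟩
      (fun _ he => not_threeEC_deleteEdges_diff_singleton hcard he) he₁ he₂
  have hzero : {e | e ∈ G.edgeSet ∧ (if e ∈ R then 0 else (f e).succ) = 0} = R := by
    ext e
    by_cases he : e ∈ R
    · simp [he, hR.1 he]
    · simp [he, Fin.succ_ne_zero]
  exact ⟨_, ⟨hf.ite_succ hmatching, by rw [hzero, hcard]⟩, hzero⟩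

/-- Every representative conflicting subset of minimal order of a finite subcubic class two
graph is the set of conflicting edges of some minimal colouring. -/
theorem stmt_8 {V : Type*} [Fintype V] (G : SimpleGraph V)
    (hsub : Subcubic G) (hclass2 : ¬ ThreeEC G)
    (R : Set (Sym2 V)) (hR : RepConfl G R)
    (hmin : ∀ R' : Set (Sym2 V), RepConfl G R' → R.ncard ≤ R'.ncard) :
    ∃ f : Sym2 V → Fin 4, IsMinimalColoring G f ∧ {e | e ∈ G.edgeSet ∧ f e = 0} = R :=
  stmt_8_general G hsub R hR hmin
end

section
/- Let G be a finite subcubic class two graph whose minimal conflicting subgraphs are pairwise edge-disjoint. Then the resistance r(G) equals the number of distinct minimal conflicting subgraphs of G. -/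
open SimpleGraph

variable {V : Type*}

lemma threeEC_mono {G H : SimpleGraph V} (h : H ≤ G) (hG : ThreeEC G) : ThreeEC H := by
  obtain ⟨f, hf⟩ := hG
  exact ⟨f, fun e₁ h₁ e₂ h₂ => hf e₁ (SimpleGraph.edgeSet_mono h h₁) e₂ (SimpleGraph.edgeSet_mono h h₂)⟩

lemma threeEC_of_empty {H : SimpleGraph V} (h : H.edgeSet = ∅) : ThreeEC H :=
  ⟨fun _ => 0, fun e₁ h₁ => by simp [h] at h₁⟩

lemma exists_minConfl [Fintype V] {G : SimpleGraph V} :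
    ∀ n (H : SimpleGraph V), H.edgeSet.ncard ≤ n → H ≤ G → ¬ ThreeEC H →
    ∃ M, MinConfl G M ∧ M ≤ H := by
  intro n
  induction n with
  | zero =>
      intro H hc hle hnt
      exact absurd (threeEC_of_empty ((Set.ncard_eq_zero (Set.toFinite _)).mp (Nat.le_zero.mp hc))) hnt
  | succ n ih =>
      intro H hc hle hnt
      by_cases hmin : ∀ e ∈ H.edgeSet, ThreeEC (H.deleteEdges {e})
      · exact ⟨H, ⟨hle, hnt, hmin⟩, le_refl H⟩
      · push_neg at hmin
        obtain ⟨e, he, hne⟩ := hmin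
        have hcard : (H.deleteEdges {e}).edgeSet.ncard ≤ n := by
          rw [edgeSet_deleteEdges]
          have : (H.edgeSet \ {e}).ncard < H.edgeSet.ncard :=
            Set.ncard_diff_singleton_lt_of_mem he (Set.toFinite _)
          omega
        obtain ⟨M, hM, hMle⟩ := ih (H.deleteEdges {e}) hcard ((deleteEdges_le _).trans hle) hne
        exact ⟨M, hM, hMle.trans (deleteEdges_le _)⟩

lemma le_deleteEdges_of_disjoint {G M : SimpleGraph V} {R : Set (Sym2 V)}
    (hle : M ≤ G) (hd : Disjoint R M.edgeSet) : M ≤ G.deleteEdges R := by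
  intro a b hab
  rw [deleteEdges_adj]
  exact ⟨hle hab, fun hmem => hd.ne_of_mem hmem hab rfl⟩

/-- If the minimal conflicting subgraphs of a finite subcubic class two graph are pairwise
edge-disjoint, then the resistance equals the number of minimal conflicting subgraphs. -/
theorem stmt_10 {V : Type*} [Fintype V] [DecidableEq V] (G : SimpleGraph V)
    (hsub : Subcubic G) (hclass2 : ¬ ThreeEC G)
    (hdisj : ∀ M M' : SimpleGraph V, MinConfl G M → MinConfl G M' → M ≠ M' →
      Disjoint M.edgeSet M'.edgeSet) :
    resistance G = {M : SimpleGraph V | MinConfl G M}.ncard := by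
  classical
  set S : Set (SimpleGraph V) := {M | MinConfl G M} with hS
  -- every minimal conflicting subgraph has an edge
  have hedge : ∀ M ∈ S, M.edgeSet.Nonempty := by
    intro M hM
    rcases Set.eq_empty_or_nonempty M.edgeSet with h | h
    · exact absurd (threeEC_of_empty h) hM.2.1
    · exact h
  -- S is nonempty
  obtain ⟨M₀, hM₀, -⟩ := exists_minConfl (G := G) G.edgeSet.ncard G le_rfl le_rfl hclass2
  have hSne : S.Nonempty := ⟨M₀, hM₀⟩
  have : Nonempty (Sym2 V) := ⟨(hedge M₀ hM₀).some⟩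
  -- pick an edge in each minimal conflicting subgraph
  let pick : SimpleGraph V → Sym2 V := fun M =>
    if h : M.edgeSet.Nonempty then h.some else Classical.arbitrary _
  have hpick : ∀ M ∈ S, pick M ∈ M.edgeSet := by
    intro M hM
    simp only [pick, dif_pos (hedge M hM)]
    exact (hedge M hM).some_mem
  have hinj : Set.InjOn pick S := by
    intro M hM M' hM' hpp
    by_contra hne
    exact (hdisj M M' hM hM' hne).ne_of_mem (hpick M hM) (hpick M' hM') hpp
  -- upper bound
  have hub : resistance G ≤ S.ncard := by
    apply Nat.sInf_le
    refine ⟨pick '' S, Set.ncard_image_of_injOn hinj, ?_⟩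
    by_contra hnt
    obtain ⟨M, hM, hMle⟩ := exists_minConfl (G := G) (G.deleteEdges (pick '' S)).edgeSet.ncard
      (G.deleteEdges (pick '' S)) le_rfl (deleteEdges_le _) hnt
    have h1 : pick M ∈ M.edgeSet := hpick M hM
    have h2 : M.edgeSet ⊆ G.edgeSet \ pick '' S := by
      have := SimpleGraph.edgeSet_mono hMle
      rwa [edgeSet_deleteEdges] at this
    exact (h2 h1).2 ⟨M, hM, rfl⟩
  -- lower bound
  have hlb : S.ncard ≤ resistance G := by
    have hmem : resistance G ∈ {n | ∃ R : Set (Sym2 V), R.ncard = n ∧ ThreeEC (G.deleteEdges R)} := by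
      apply Nat.sInf_mem
      refine ⟨G.edgeSet.ncard, G.edgeSet, rfl, threeEC_of_empty ?_⟩
      rw [edgeSet_deleteEdges]; simp
    obtain ⟨R, hRcard, hR3⟩ := hmem
    -- each M ∈ S meets R
    have hhit : ∀ M ∈ S, (R ∩ M.edgeSet).Nonempty := by
      intro M hM
      rcases Set.eq_empty_or_nonempty (R ∩ M.edgeSet) with h | h
      · have hd : Disjoint R M.edgeSet := Set.disjoint_iff_inter_eq_empty.mpr h
        exact absurd (threeEC_mono (le_deleteEdges_of_disjoint hM.1 hd) hR3) hM.2.1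
      · exact h
    let g : SimpleGraph V → Sym2 V := fun M =>
      if h : (R ∩ M.edgeSet).Nonempty then h.some else Classical.arbitrary _
    have hg : ∀ M ∈ S, g M ∈ R ∩ M.edgeSet := by
      intro M hM
      simp only [g, dif_pos (hhit M hM)]
      exact (hhit M hM).some_mem
    have hginj : Set.InjOn g S := by
      intro M hM M' hM' hpp
      by_contra hne
      exact (hdisj M M' hM hM' hne).ne_of_mem (hg M hM).2 (hg M' hM').2 hpp
    calc S.ncard = (g '' S).ncard := (Set.ncard_image_of_injOn hginj).symm
      _ ≤ R.ncard := Set.ncard_le_ncard (by rintro x ⟨M, hM, rfl⟩; exact (hg M hM).1) (Set.toFinite _)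
      _ = resistance G := hRcard
  exact le_antisymm hub hlb
end
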